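/- If x ∈ Affine_z with z < c·e, then the radial projection π = π(x) satisfies (c·π − z*)/(c·e − z*) ≤ (f̂*_{μ,z} − f̂_μ(x) + μ ln n)·((c·e − z*)/(c·e − z)). -/

import Mathlib

/-!
For a hyperbolicity cone, `λ_min(w)` is the least root of `t ↦ p (w - t • e)`: below every root
the segment from `w - l • e` to `e` avoids `{p = 0}` and so stays in the component `int K`, while
`w - l • e ∈ K` puts `w - t • e` in `int K` for every `t < l`. Weak duality bounds `λ_min` by
`λ* = (z - z*) / (c·e - z*)` on `Affine_z`, and `(1 - λ*) x* + λ* e` attains it, whence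
`f̂*_{μ,z} ≥ λ* - μ ln n`. Together with `f̂_μ ≤ λ_min`, the claim reduces to
`1 - 1/u ≤ u - 1` for `u = (1 - λ_min(x)) (c·e - z*) / (c·e - z)`.
-/

open RealInnerProductSpace

theorem MvPolynomial.IsHomogeneous.eval_smul {σ R : Type*} [CommSemiring R]
    {φ : MvPolynomial σ R} {n : ℕ} (hφ : φ.IsHomogeneous n) (a : R) (v : σ → R) :
    eval (a • v) φ = a ^ n * eval v φ := by
  rw [eval_eq, eval_eq, Finset.mul_sum]
  refine Finset.sum_congr rfl fun m hm => ?_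
  have hdeg : ∑ i ∈ m.support, m i = n := by
    rw [← Finsupp.degree_apply, Finsupp.degree_eq_weight_one]
    exact hφ (mem_support_iff.mp hm)
  simp_rw [Pi.smul_apply, smul_eq_mul, mul_pow, Finset.prod_mul_distrib,
    Finset.prod_pow_eq_pow_sum, hdeg]
  ring

section Cone

variable {V : Type*} [NormedAddCommGroup V] [NormedSpace ℝ V] {K : Set V}

theorem add_mem_of_convex_of_smul_mem (hconv : Convex ℝ K)
    (hcone : ∀ t : ℝ, 0 < t → ∀ x ∈ K, t • x ∈ K) {u v : V} (hu : u ∈ K)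
    (hv : v ∈ K) : u + v ∈ K := by
  have h := hcone 2 two_pos _ (hconv hu hv (by norm_num : (0 : ℝ) ≤ 1 / 2)
    (by norm_num : (0 : ℝ) ≤ 1 / 2) (by norm_num))
  rwa [smul_add, smul_smul, smul_smul, mul_one_div_cancel two_ne_zero, one_smul,
    one_smul] at h

theorem smul_mem_interior_of_smul_mem (hcone : ∀ t : ℝ, 0 < t → ∀ x ∈ K, t • x ∈ K)
    {t : ℝ} (ht : 0 < t) {u : V} (hu : u ∈ interior K) : t • u ∈ interior K :=
  interior_maximal (by rintro _ ⟨w, hw, rfl⟩; exact hcone t ht w (interior_subset hw))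
    (isOpenMap_smul₀ ht.ne' _ isOpen_interior) ⟨u, hu, rfl⟩

theorem add_mem_interior_of_convex_of_smul_mem (hconv : Convex ℝ K)
    (hcone : ∀ t : ℝ, 0 < t → ∀ x ∈ K, t • x ∈ K) {u v : V} (hu : u ∈ interior K)
    (hv : v ∈ K) : u + v ∈ interior K :=
  interior_maximal
    (by rintro _ ⟨a, ha, b, hb, rfl⟩
        exact add_mem_of_convex_of_smul_mem hconv hcone (interior_subset ha) hb)
    isOpen_interior.add_right (Set.add_mem_add hu hv)

theorem sub_smul_mem_of_le (hconv : Convex ℝ K)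
    (hcone : ∀ t : ℝ, 0 < t → ∀ x ∈ K, t • x ∈ K) {e w : V} (he : e ∈ K) {l m : ℝ}
    (hw : w - l • e ∈ K) (hml : m ≤ l) : w - m • e ∈ K := by
  rcases hml.eq_or_lt with rfl | hml
  · exact hw
  have h := add_mem_of_convex_of_smul_mem hconv hcone (hcone _ (sub_pos.2 hml) e he) hw
  rwa [show (l - m) • e + (w - l • e) = w - m • e by module] at h

end Cone

/-- A hyperbolicity cone `K` of `p` in direction `e`, without the real-rootedness of
`t ↦ p (x - t • e)`. -/
structure IsComponentCone {V : Type*} [NormedAddCommGroup V] [NormedSpace ℝ V]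
    (K : Set V) (p : V → ℝ) (n : ℕ) (e : V) : Prop where
  convex : Convex ℝ K
  smul_mem : ∀ t : ℝ, 0 < t → ∀ x ∈ K, t • x ∈ K
  map_smul : ∀ (a : ℝ) (v : V), p (a • v) = a ^ n * p v
  mem_interior : e ∈ interior K
  interior_eq : interior K = connectedComponentIn {v | p v ≠ 0} e

namespace IsComponentCone

variable {V : Type*} [NormedAddCommGroup V] [NormedSpace ℝ V] {K : Set V} {p : V → ℝ}
  {n : ℕ} {e v w : V} {l m t : ℝ}

theorem apply_ne_zero (hK : IsComponentCone K p n e) (hv : v ∈ interior K) : p v ≠ 0 := by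
  rw [hK.interior_eq] at hv
  exact connectedComponentIn_subset _ _ hv

theorem sub_smul_mem_interior (hK : IsComponentCone K p n e)
    (hl : ∀ t, p (w - t • e) = 0 → l < t) : w - l • e ∈ interior K := by
  have hseg : segment ℝ (w - l • e) e ⊆ {v | p v ≠ 0} := by
    rintro _ ⟨a, b, ha, hb, hab, rfl⟩
    rcases ha.eq_or_lt with rfl | ha
    · rw [zero_add] at hab
      simpa [hab] using hK.apply_ne_zero hK.mem_interior
    have hpt : a • (w - l • e) + b • e = a • (w - (l - b / a) • e) := by
      rw [smul_sub, smul_sub, smul_smul, smul_smul, mul_sub, mul_div_cancel₀ _ ha.ne',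
        sub_smul]
      abel
    have hba : 0 ≤ b / a := div_nonneg hb ha.le
    rw [Set.mem_ofPred_eq, hpt, hK.map_smul]
    exact mul_ne_zero (pow_ne_zero _ ha.ne') fun h => by linarith [hl _ h]
  rw [hK.interior_eq]
  exact (convex_segment _ _).isPreconnected.subset_connectedComponentIn
    (right_mem_segment ℝ _ _) hseg (left_mem_segment ℝ _ _)

theorem le_of_apply_sub_smul_eq_zero (hK : IsComponentCone K p n e) (hw : w - l • e ∈ K)
    (ht : p (w - t • e) = 0) : l ≤ t := by
  by_contra! htl
  have hmem := add_mem_interior_of_convex_of_smul_mem hK.convex hK.smul_mem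
    (smul_mem_interior_of_smul_mem hK.smul_mem (sub_pos.2 htl) hK.mem_interior) hw
  rw [show (l - t) • e + (w - l • e) = w - t • e by module] at hmem
  exact hK.apply_ne_zero hmem ht

theorem isLUB_setOf_sub_smul_mem (hK : IsComponentCone K p n e) (hm : p (w - m • e) = 0)
    (hmin : ∀ t, p (w - t • e) = 0 → m ≤ t) : IsLUB {l | w - l • e ∈ K} m := by
  refine ⟨fun l hl => hK.le_of_apply_sub_smul_eq_zero hl hm, fun b hb => ?_⟩
  by_contra! hbm
  have hmid : (b + m) / 2 ∈ {l | w - l • e ∈ K} :=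
    interior_subset (s := K) (hK.sub_smul_mem_interior fun t ht => by linarith [hmin t ht])
  linarith [hb hmid]

theorem exists_mem_roots_isLUB (hK : IsComponentCone K p n e) {q : V → Polynomial ℝ}
    (hq : ∀ x t, (q x).eval t = p (x - t • e)) (hw : (q w).roots ≠ 0) :
    ∃ m ∈ (q w).roots, IsLUB {l | w - l • e ∈ K} m ∧ sSup {l | w - l • e ∈ K} = m := by
  have hqw : q w ≠ 0 := fun h => hw (by rw [h, Polynomial.roots_zero])
  have hroot : ∀ t, t ∈ (q w).roots ↔ p (w - t • e) = 0 := fun t => by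
    rw [Polynomial.mem_roots hqw, Polynomial.IsRoot.def, hq]
  obtain ⟨m, hm, hmin⟩ :=
    (q w).roots.toFinset.exists_min_image id (Multiset.toFinset_nonempty.2 hw)
  rw [Multiset.mem_toFinset] at hm
  have hmin' : ∀ t, p (w - t • e) = 0 → m ≤ t := fun t ht =>
    hmin t (Multiset.mem_toFinset.2 ((hroot t).2 ht))
  have hlub := hK.isLUB_setOf_sub_smul_mem ((hroot m).1 hm) hmin'
  refine ⟨m, hm, hlub, hlub.csSup_eq ⟨m - 1, interior_subset (s := K) ?_⟩⟩
  exact hK.sub_smul_mem_interior fun t ht => by linarith [hmin' t ht]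

end IsComponentCone

/-- The paper's `f̂_μ`, as a function of the multiset of eigenvalues. -/
noncomputable def Multiset.softMin (μ : ℝ) (s : Multiset ℝ) : ℝ :=
  -(μ * Real.log (s.map fun l => Real.exp (-(l / μ))).sum)

namespace Multiset

variable {μ : ℝ} {s : Multiset ℝ}

theorem exp_le_sum_map_exp {r : ℝ} (hr : r ∈ s) :
    Real.exp (-(r / μ)) ≤ (s.map fun l => Real.exp (-(l / μ))).sum :=
  single_le_sum (by simp only [mem_map]; rintro _ ⟨l, -, rfl⟩; positivity) _
    (mem_map_of_mem _ hr)

theorem softMin_le (hμ : 0 < μ) {r : ℝ} (hr : r ∈ s) : softMin μ s ≤ r := by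
  have hle := exp_le_sum_map_exp (μ := μ) hr
  have hlog := (Real.le_log_iff_exp_le ((Real.exp_pos _).trans_le hle)).2 hle
  rw [softMin, neg_le, ← div_le_iff₀' hμ, neg_div]
  exact hlog

theorem sub_mul_log_card_le_softMin (hμ : 0 < μ) (hs : s ≠ 0) {m : ℝ}
    (hm : ∀ r ∈ s, m ≤ r) : m - μ * Real.log (card s) ≤ softMin μ s := by
  obtain ⟨r, hr⟩ := exists_mem_of_ne_zero hs
  have hpos : 0 < (s.map fun l => Real.exp (-(l / μ))).sum :=
    (Real.exp_pos _).trans_le (exp_le_sum_map_exp hr)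
  have hsum : (s.map fun l => Real.exp (-(l / μ))).sum ≤ card s * Real.exp (-(m / μ)) := by
    simpa using sum_le_card_nsmul (s.map fun l => Real.exp (-(l / μ))) _ <| by
      simp only [mem_map]
      rintro _ ⟨l, hl, rfl⟩
      exact Real.exp_le_exp.2 (neg_le_neg (div_le_div_of_nonneg_right (hm l hl) hμ.le))
  have hlog := Real.log_le_log hpos hsum
  rw [Real.log_mul (Nat.cast_ne_zero.2 (card_pos.2 hs).ne') (Real.exp_ne_zero _),
    Real.log_exp] at hlog
  rw [softMin]
  have := mul_le_mul_of_nonneg_left hlog hμ.le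
  rw [mul_add, mul_neg, mul_div_cancel₀ _ hμ.ne'] at this
  linarith

end Multiset

section Duality

variable {V : Type*} [NormedAddCommGroup V] [InnerProductSpace ℝ V] {K : Set V}
  {S : AffineSubspace ℝ V} {c e w : V} {zstar l : ℝ}

theorem mul_le_inner_sub_of_sub_smul_mem (hcone : ∀ t : ℝ, 0 < t → ∀ x ∈ K, t • x ∈ K)
    (heS : e ∈ S) (hwS : w ∈ S) (hopt : ∀ y, y ∈ S → y ∈ K → zstar ≤ ⟪c, y⟫)
    (hl : l < 1) (hw : w - l • e ∈ K) : (1 - l) * zstar ≤ ⟪c, w⟫ - l * ⟪c, e⟫ := by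
  have h1l : 0 < 1 - l := sub_pos.2 hl
  have hline : (1 - l)⁻¹ • (w - l • e) = AffineMap.lineMap e w (1 - l)⁻¹ := by
    rw [AffineMap.lineMap_apply_module,
      show 1 - (1 - l)⁻¹ = -(l * (1 - l)⁻¹) by field_simp; ring]
    module
  have h := hopt _ (hline ▸ AffineMap.lineMap_mem _ heS hwS)
    (hcone _ (inv_pos.2 h1l) _ hw)
  rwa [inner_smul_right, inner_sub_right, inner_smul_right, le_inv_mul_iff₀ h1l] at h

theorem le_div_of_sub_smul_mem (hconv : Convex ℝ K)
    (hcone : ∀ t : ℝ, 0 < t → ∀ x ∈ K, t • x ∈ K) (heK : e ∈ K) (heS : e ∈ S)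
    (hwS : w ∈ S) (hopt : ∀ y, y ∈ S → y ∈ K → zstar ≤ ⟪c, y⟫) (hwe : ⟪c, w⟫ < ⟪c, e⟫)
    (hzstar : zstar < ⟪c, e⟫) (hw : w - l • e ∈ K) :
    l ≤ (⟪c, w⟫ - zstar) / (⟪c, e⟫ - zstar) := by
  set lstar := (⟪c, w⟫ - zstar) / (⟪c, e⟫ - zstar)
  have hlstar : lstar < 1 := by rw [div_lt_one (sub_pos.2 hzstar)]; linarith
  by_contra! hl
  -- `l` itself may be `≥ 1`; move down to a level strictly between `lstar` and `1`.
  set l' := min l ((lstar + 1) / 2)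
  have hl' : lstar < l' := lt_min hl (by linarith)
  have h := mul_le_inner_sub_of_sub_smul_mem hcone heS hwS hopt
    (show l' < 1 from (min_le_right _ _).trans_lt (by linarith))
    (sub_smul_mem_of_le hconv hcone heK hw (min_le_left _ _))
  rw [div_lt_iff₀ (sub_pos.2 hzstar)] at hl'
  linarith

theorem exists_inner_eq_sub_smul_mem (hcone : ∀ t : ℝ, 0 < t → ∀ x ∈ K, t • x ∈ K)
    (heS : e ∈ S) {x : V} (hxS : x ∈ S) (hxK : x ∈ K) {z : ℝ} (hz : z < ⟪c, e⟫)
    (hx : ⟪c, x⟫ < ⟪c, e⟫) :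
    ∃ y ∈ S, ⟪c, y⟫ = z ∧ y - ((z - ⟪c, x⟫) / (⟪c, e⟫ - ⟪c, x⟫)) • e ∈ K := by
  set lstar := (z - ⟪c, x⟫) / (⟪c, e⟫ - ⟪c, x⟫)
  have hlstar : lstar < 1 := by rw [div_lt_one (sub_pos.2 hx)]; linarith
  refine ⟨AffineMap.lineMap x e lstar, AffineMap.lineMap_mem _ hxS heS, ?_, ?_⟩
  · rw [AffineMap.lineMap_apply_module, inner_add_right, inner_smul_right, inner_smul_right]
    linarith [div_mul_cancel₀ (z - ⟪c, x⟫) (sub_pos.2 hx).ne']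
  · rw [AffineMap.lineMap_apply_module, add_sub_cancel_right]
    exact hcone _ (sub_pos.2 hlstar) _ hxK

end Duality

theorem radial_relative_error_le {E zstar z l F : ℝ} (hzstar : zstar < E) (hz : z < E)
    (hl : l ≤ (z - zstar) / (E - zstar)) (hF : (z - zstar) / (E - zstar) - l ≤ F) :
    (E + (1 - l)⁻¹ * (z - E) - zstar) / (E - zstar) ≤ F * ((E - zstar) / (E - z)) := by
  have hA : 0 < E - zstar := sub_pos.2 hzstar
  have hZ : 0 < E - z := sub_pos.2 hz
  rw [show (z - zstar) / (E - zstar) = 1 - (E - z) / (E - zstar) by field_simp; ring]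
    at hl hF
  rw [show E + (1 - l)⁻¹ * (z - E) - zstar = (E - zstar) - (E - z) / (1 - l) by ring]
  generalize E - zstar = A, E - z = Z at *
  have hb : 0 < 1 - l := (div_pos hZ hA).trans_le (by linarith)
  have hu : 0 < (1 - l) * A := mul_pos hb hA
  -- with `u = (1 - l) A`, the claim reduces to `Z / u + u / Z ≥ 2`
  calc (A - Z / (1 - l)) / A = 1 - Z / ((1 - l) * A) := by field_simp
    _ ≤ (1 - l) * A / Z - 1 := by
        have : Z / ((1 - l) * A) + (1 - l) * A / Z - 2
            = ((1 - l) * A - Z) ^ 2 / ((1 - l) * A * Z) := by field_simp; ring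
        nlinarith [div_nonneg (sq_nonneg ((1 - l) * A - Z)) (mul_pos hu hZ).le]
    _ = (1 - Z / A - l) * (A / Z) := by field_simp; ring
    _ ≤ F * (A / Z) := mul_le_mul_of_nonneg_right hF (div_nonneg hA.le hZ.le)

theorem relative_error_le_smoothed_gap_general
    {d n : ℕ} (hn : 0 < n)
    (K : Set (EuclideanSpace ℝ (Fin d)))
    (hKconv : Convex ℝ K)
    (hKcone : ∀ t : ℝ, 0 < t → ∀ x ∈ K, t • x ∈ K)
    (P : MvPolynomial (Fin d) ℝ) (hP : P.IsHomogeneous n)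
    (e : EuclideanSpace ℝ (Fin d)) (he : e ∈ interior K)
    (hcomp : interior K =
      connectedComponentIn {x | MvPolynomial.eval (fun i => x i) P ≠ 0} e)
    (q : EuclideanSpace ℝ (Fin d) → Polynomial ℝ)
    (hq : ∀ x t, (q x).eval t = MvPolynomial.eval (fun i => x i - t * e i) P)
    (hroots : ∀ x, Multiset.card (q x).roots = n)
    (lamMin : EuclideanSpace ℝ (Fin d) → ℝ)
    (hlam : ∀ x, lamMin x = sSup {l : ℝ | x - l • e ∈ K})
    (S : AffineSubspace ℝ (EuclideanSpace ℝ (Fin d))) (c : EuclideanSpace ℝ (Fin d))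
    (heS : e ∈ S)
    (z zstar : ℝ) (hz : z < ⟪c, e⟫)
    (hzstar : ∃ x, (x ∈ S ∧ x ∈ K ∧ ∀ y, y ∈ S → y ∈ K → ⟪c, x⟫ ≤ ⟪c, y⟫) ∧
      ⟪c, x⟫ = zstar)
    (μ : ℝ) (hμ : 0 < μ)
    (fhat : EuclideanSpace ℝ (Fin d) → ℝ)
    (hfhat : ∀ x, fhat x =
      -(μ * Real.log (((q x).roots.map (fun lam => Real.exp (-(lam / μ)))).sum)))
    (fstar : ℝ)
    (hfstar : fstar = sSup {r : ℝ | ∃ y, y ∈ S ∧ ⟪c, y⟫ = z ∧ r = fhat y})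
    (x : EuclideanSpace ℝ (Fin d)) (hxS : x ∈ S) (hxz : ⟪c, x⟫ = z)
    (π : EuclideanSpace ℝ (Fin d))
    (hπ : π = e + (1 - lamMin x)⁻¹ • (x - e)) :
    (⟪c, π⟫ - zstar) / (⟪c, e⟫ - zstar) ≤
      (fstar - fhat x + μ * Real.log n) * ((⟪c, e⟫ - zstar) / (⟪c, e⟫ - z)) := by
  obtain ⟨xs, ⟨hxsS, hxsK, hxsmin⟩, rfl⟩ := hzstar
  rcases (hxsmin e heS (interior_subset he)).eq_or_lt with hE | hE
  · rw [← hE, sub_self, div_zero, zero_div, mul_zero]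
  set lstar := (z - ⟪c, xs⟫) / (⟪c, e⟫ - ⟪c, xs⟫)
  set p : EuclideanSpace ℝ (Fin d) → ℝ := fun v => MvPolynomial.eval (fun i => v i) P
  have hK : IsComponentCone K p n e :=
    ⟨hKconv, hKcone, fun a v => hP.eval_smul a _, he, hcomp⟩
  have hqp : ∀ w t, (q w).eval t = p (w - t • e) := fun w t => by simp [hq, p]
  have hne : ∀ w, (q w).roots ≠ 0 := fun w h =>
    hn.ne' (by rw [← hroots w, h, Multiset.card_zero])
  have hlam_root : ∀ w, ∃ m ∈ (q w).roots, IsLUB {l | w - l • e ∈ K} m ∧ lamMin w = m :=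
    fun w => by simpa only [hlam] using hK.exists_mem_roots_isLUB hqp (hne w)
  have hfhat_soft : ∀ w, fhat w = Multiset.softMin μ (q w).roots := hfhat
  have hfhat_le : ∀ w, fhat w ≤ lamMin w := fun w => by
    obtain ⟨m, hm, -, hw⟩ := hlam_root w
    exact hw ▸ hfhat_soft w ▸ Multiset.softMin_le hμ hm
  have hlam_le : ∀ w ∈ S, ⟪c, w⟫ = z → lamMin w ≤ lstar := by
    rintro w hwS rfl
    obtain ⟨m, -, hlub, hw⟩ := hlam_root w
    exact hw ▸ hlub.2 fun l hl =>
      le_div_of_sub_smul_mem hKconv hKcone (interior_subset he) heS hwS hxsmin hz hE hl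
  obtain ⟨y, hyS, hyz, hyK⟩ := exists_inner_eq_sub_smul_mem hKcone heS hxsS hxsK hz hE
  have hfstar_ge : lstar - μ * Real.log n ≤ fstar := by
    have hy := Multiset.sub_mul_log_card_le_softMin hμ (hne y) fun r hr =>
      hK.le_of_apply_sub_smul_eq_zero hyK (hqp y r ▸ (Polynomial.mem_roots'.1 hr).2)
    rw [hroots, ← hfhat_soft] at hy
    refine hfstar ▸ hy.trans (le_csSup ⟨lstar, ?_⟩ ⟨y, hyS, hyz, rfl⟩)
    rintro _ ⟨w, hwS, hwz, rfl⟩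
    exact (hfhat_le w).trans (hlam_le w hwS hwz)
  rw [hπ, inner_add_right, inner_smul_right, inner_sub_right, hxz]
  exact radial_relative_error_le hE hz (hlam_le x hxS hxz) (by linarith [hfhat_le x])

/-- Lemma 3.5: if `x ∈ Affine_z` with `z < c·e`, then `π = π(x)` satisfies
`(c·π − z*)/(c·e − z*) ≤ (f̂*_{μ,z} − f̂_μ(x) + μ ln n)·((c·e − z*)/(c·e − z))`. -/
theorem relative_error_le_smoothed_gap
    {d n : ℕ} (hn : 0 < n)
    (K : Set (EuclideanSpace ℝ (Fin d)))
    (hKclosed : IsClosed K) (hKconv : Convex ℝ K)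
    (hKcone : ∀ t : ℝ, 0 < t → ∀ x ∈ K, t • x ∈ K)
    (P : MvPolynomial (Fin d) ℝ) (hP : P.IsHomogeneous n)
    (e : EuclideanSpace ℝ (Fin d)) (he : e ∈ interior K)
    (hcomp : interior K =
      connectedComponentIn {x | MvPolynomial.eval (fun i => x i) P ≠ 0} e)
    (q : EuclideanSpace ℝ (Fin d) → Polynomial ℝ)
    (hq : ∀ x t, (q x).eval t = MvPolynomial.eval (fun i => x i - t * e i) P)
    (hroots : ∀ x, Multiset.card (q x).roots = n)
    (lamMin : EuclideanSpace ℝ (Fin d) → ℝ)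
    (hlam : ∀ x, lamMin x = sSup {l : ℝ | x - l • e ∈ K})
    (S : AffineSubspace ℝ (EuclideanSpace ℝ (Fin d))) (c : EuclideanSpace ℝ (Fin d))
    (heS : e ∈ S)
    (z zstar : ℝ) (hz : z < ⟪c, e⟫)
    (hzstar : ∃ x, (x ∈ S ∧ x ∈ K ∧ ∀ y, y ∈ S → y ∈ K → ⟪c, x⟫ ≤ ⟪c, y⟫) ∧
      ⟪c, x⟫ = zstar)
    (μ : ℝ) (hμ : 0 < μ)
    (fhat : EuclideanSpace ℝ (Fin d) → ℝ)
    (hfhat : ∀ x, fhat x =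
      -(μ * Real.log (((q x).roots.map (fun lam => Real.exp (-(lam / μ)))).sum)))
    (fstar : ℝ)
    (hfstar : fstar = sSup {r : ℝ | ∃ y, y ∈ S ∧ ⟪c, y⟫ = z ∧ r = fhat y})
    (x : EuclideanSpace ℝ (Fin d)) (hxS : x ∈ S) (hxz : ⟪c, x⟫ = z)
    (π : EuclideanSpace ℝ (Fin d))
    (hπ : π = e + (1 - lamMin x)⁻¹ • (x - e)) :
    (⟪c, π⟫ - zstar) / (⟪c, e⟫ - zstar) ≤
      (fstar - fhat x + μ * Real.log n) * ((⟪c, e⟫ - zstar) / (⟪c, e⟫ - z)) :=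
  relative_error_le_smoothed_gap_general hn K hKconv hKcone P hP e he hcomp q hq hroots lamMin hlam
    S c heS z zstar hz hzstar μ hμ fhat hfhat fstar hfstar x hxS hxz π hπ
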